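/- For the heat equation A_m = σ d²/dx² on {f ∈ H²(0,π) : f(π) = 0} with boundary operator G f = f'(0), the Dirichlet operator is (D_λ u)(x) = sinh(√(λ/σ)(π - x)) / (√(λ/σ) cosh(√(λ/σ) π)) · u for λ > 0 and (D_0 u)(x) = (π - x) u; in particular M D_0 = k π for the perturbation M f = -k f(0). -/

import Mathlib

open Real

/-! With `s = √(λ/σ)`, the function `sinh (s (π - x))` vanishes at `π` and satisfies
`f'' = s² f = σ⁻¹ λ f`; dividing by `-f'(0) = s cosh (s π) > 0` normalises the boundary value.
For `λ = 0` the same role is played by the affine function `π - x`. -/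

theorem hasDerivAt_sinh_mul_sub (s a x : ℝ) :
    HasDerivAt (fun y => sinh (s * (a - y))) (cosh (s * (a - x)) * -s) x := by
  simpa using (((hasDerivAt_id x).const_sub a).const_mul s).sinh

theorem hasDerivAt_cosh_mul_sub (s a x : ℝ) :
    HasDerivAt (fun y => cosh (s * (a - y))) (sinh (s * (a - x)) * -s) x := by
  simpa using (((hasDerivAt_id x).const_sub a).const_mul s).cosh

section SinhProfile

variable {s : ℝ} (a u : ℝ)

theorem hasDerivAt_sinh_profile (hs : s ≠ 0) (x : ℝ) :
    HasDerivAt (fun y => sinh (s * (a - y)) / (s * cosh (s * a)) * u)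
      (-cosh (s * (a - x)) / cosh (s * a) * u) x := by
  refine (((hasDerivAt_sinh_mul_sub s a x).div_const _).mul_const u).congr_deriv ?_
  field_simp [(cosh_pos (s * a)).ne']

theorem hasDerivAt_sinh_profile_deriv (hs : s ≠ 0) (x : ℝ) :
    HasDerivAt (fun y => -cosh (s * (a - y)) / cosh (s * a) * u)
      (s ^ 2 * (sinh (s * (a - x)) / (s * cosh (s * a)) * u)) x := by
  refine ((((hasDerivAt_cosh_mul_sub s a x).neg).div_const _).mul_const u).congr_deriv ?_
  field_simp [(cosh_pos (s * a)).ne']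

theorem neg_sinh_profile_deriv_zero :
    -(-cosh (s * (a - 0)) / cosh (s * a) * u) = u := by
  field_simp [(cosh_pos (s * a)).ne']
  simp

end SinhProfile

/-- For the heat operator `A_m = σ d²/dx²` on
`{f ∈ H²(0,π) : f(π) = 0}` with boundary operator `G f = -f'(0)`, the Dirichlet
operator is `(D_λ u)(x) = sinh(√(λ/σ)(π-x)) / (√(λ/σ) cosh(√(λ/σ) π)) · u` for
`λ > 0`, and `(D_0 u)(x) = (π - x) u`; in particular `M D_0 = k π` for the
boundary perturbation `M f = k f(0)`. -/
theorem heat_dirichlet_operator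
    (σ k : ℝ) (hσ : 0 < σ) :
    -- the case `λ > 0`:
    (∀ lam : ℝ, 0 < lam →
      ∀ Dfun : ℝ → ℝ → ℝ,
        (Dfun = fun u x =>
          Real.sinh (Real.sqrt (lam / σ) * (π - x)) /
            (Real.sqrt (lam / σ) * Real.cosh (Real.sqrt (lam / σ) * π)) * u) →
        ∀ u : ℝ, ∃ F' : ℝ → ℝ,
          -- `σ (D_λ u)'' = λ (D_λ u)`:
          (∀ x : ℝ, HasDerivAt (Dfun u) (F' x) x) ∧
          (∀ x : ℝ, HasDerivAt F' (σ⁻¹ * (lam * Dfun u x)) x) ∧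
          -- `(D_λ u)(π) = 0` and `G (D_λ u) = -(D_λ u)'(0) = u`:
          Dfun u π = 0 ∧ -F' 0 = u) ∧
    -- the case `λ = 0`:
    (∀ D0fun : ℝ → ℝ → ℝ, (D0fun = fun u x => (π - x) * u) →
      ∀ u : ℝ, ∃ F' : ℝ → ℝ,
        (∀ x : ℝ, HasDerivAt (D0fun u) (F' x) x) ∧
        (∀ x : ℝ, HasDerivAt F' 0 x) ∧
        D0fun u π = 0 ∧ -F' 0 = u ∧
        -- `M D_0 = k π`:
        k * D0fun u 0 = (k * π) * u) := by
  refine ⟨fun lam hlam _ hD u => ?_, fun _ hD u => ?_⟩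
  · subst hD
    set s := √(lam / σ)
    have hs : s ≠ 0 := (sqrt_pos.2 (div_pos hlam hσ)).ne'
    have hs_sq : s ^ 2 * σ = lam := by
      rw [sq_sqrt (div_pos hlam hσ).le, div_mul_cancel₀ _ hσ.ne']
    refine ⟨fun x => -cosh (s * (π - x)) / cosh (s * π) * u,
      hasDerivAt_sinh_profile π u hs, fun x => ?_, by simp, neg_sinh_profile_deriv_zero π u⟩
    convert hasDerivAt_sinh_profile_deriv π u hs x using 1
    rw [← hs_sq]
    field_simp
  · subst hD
    refine ⟨fun _ => -u, fun x => ?_, fun x => hasDerivAt_const x (-u), by simp, neg_neg u,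
      by simp only [sub_zero, mul_assoc]⟩
    simpa using ((hasDerivAt_id x).const_sub π).mul_const u
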